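/- For α > 0 and D ≥ 2, the operators U(π)|1⟩⟨1|U(π)* and U(π)|d_{O'}(α)⟩⟨d_{O'}(α)|U(π)*, with π ranging over S_D and d_{O'}(α) = α(e^{−iπ/8}|1⟩ + e^{iπ/8}|2⟩), span the full operator space L(ℂ^D). In particular, for m ≠ n, |m⟩⟨n| lies in their span via |m⟩⟨n| = 2^{−3/2}[(A+B) + i(A−B)] where A = e^{−iπ/4}|m⟩⟨n| + e^{iπ/4}|n⟩⟨m| and B = e^{iπ/4}|m⟩⟨n| + e^{−iπ/4}|n⟩⟨m|. -/

import Mathlib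

/-! Conjugating `|1⟩⟨1|` by permutations gives every diagonal matrix unit `|k⟩⟨k|`. Conjugating
`|d⟩⟨d|` by a permutation sending `1, 2` to `m, n` gives
`α² (|m⟩⟨m| + ω̄ |m⟩⟨n| + ω |n⟩⟨m| + |n⟩⟨n|)` with `ω = e^{iπ/4}`, so `A = ω̄ |m⟩⟨n| + ω |n⟩⟨m|`
and its mirror `B = ω |m⟩⟨n| + ω̄ |n⟩⟨m|` lie in the span. Since `ω + ω̄ = i (ω̄ - ω) = √2`,
`(A + B) + i (A - B) = 2√2 |m⟩⟨n|`, so the span contains every matrix unit. -/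

open ContinuousLinearMap
noncomputable section

/-- The permutation representation of `S_D` on `ℂ^D`: `U(π)|n⟩ = |π(n)⟩`. -/
def permU (D : ℕ) (π : Equiv.Perm (Fin D)) :
    EuclideanSpace ℂ (Fin D) →L[ℂ] EuclideanSpace ℂ (Fin D) :=
  ∑ n : Fin D,
    (innerSL ℂ (EuclideanSpace.single n (1 : ℂ))).smulRight
      (EuclideanSpace.single (π n) (1 : ℂ))

/-- The rank-one operator `|u⟩⟨v|` on `ℂ^D`. -/
def ketbraD (D : ℕ) (u v : EuclideanSpace ℂ (Fin D)) :
    EuclideanSpace ℂ (Fin D) →L[ℂ] EuclideanSpace ℂ (Fin D) :=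
  (innerSL ℂ v).smulRight u

open InnerProductSpace

theorem Equiv.Perm.exists_apply_eq_and_apply_eq {α : Type*} [DecidableEq α] {a b m n : α}
    (hab : a ≠ b) (hmn : m ≠ n) : ∃ π : Equiv.Perm α, π a = m ∧ π b = n := by
  refine ⟨Equiv.swap a m * Equiv.swap b (Equiv.swap a m n), ?_, by simp⟩
  have hna : Equiv.swap a m n ≠ a := by
    rw [Ne, Equiv.swap_apply_eq_iff, Equiv.swap_apply_left]
    exact hmn.symm
  simp [Equiv.swap_apply_of_ne_of_ne hab hna.symm]

section RankOne

variable {𝕜 E ι : Type*} [RCLike 𝕜] [NormedAddCommGroup E] [InnerProductSpace 𝕜 E]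

theorem OrthonormalBasis.span_rankOne_eq_top [Fintype ι] (b : OrthonormalBasis ι 𝕜 E) :
    Submodule.span 𝕜 (Set.range fun p : ι × ι => rankOne 𝕜 (b p.1) (b p.2)) = ⊤ := by
  refine eq_top_iff.mpr fun T _ => ?_
  rw [← T.comp_id, ← b.sum_rankOne_eq_id, comp_finsetSum]
  refine Submodule.sum_mem _ fun j _ => ?_
  rw [comp_rankOne, ← b.sum_repr' (T (b j)), map_sum, sum_apply]
  refine Submodule.sum_mem _ fun i _ => ?_
  rw [map_smul, smul_apply]
  exact Submodule.smul_mem _ _ (Submodule.subset_span ⟨(i, j), rfl⟩)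

theorem rankOne_smul_smul (a b : 𝕜) (x y : E) :
    rankOne 𝕜 (a • x) (b • y) = (a * starRingEnd 𝕜 b) • rankOne 𝕜 x y := by
  simp only [map_smulₛₗ, smul_apply, smul_smul, RingHom.id_apply, mul_comm]

theorem comp_rankOne_comp_adjoint [CompleteSpace E] (T : E →L[𝕜] E) (x y : E) :
    T ∘L rankOne 𝕜 x y ∘L adjoint T = rankOne 𝕜 (T x) (T y) := by
  rw [rankOne_comp, comp_rankOne, adjoint_adjoint]

end RankOne

theorem rankOne_exp_smul_add_exp_smul_self {E : Type*} [NormedAddCommGroup E]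
    [InnerProductSpace ℂ E] (θ : ℝ) (u v : E) :
    rankOne ℂ (Complex.exp (-(θ : ℂ) * Complex.I) • u + Complex.exp ((θ : ℂ) * Complex.I) • v)
        (Complex.exp (-(θ : ℂ) * Complex.I) • u + Complex.exp ((θ : ℂ) * Complex.I) • v) =
      rankOne ℂ u u + Complex.exp (-(2 * θ : ℝ) * Complex.I) • rankOne ℂ u v +
        Complex.exp ((2 * θ : ℝ) * Complex.I) • rankOne ℂ v u + rankOne ℂ v v := by
  simp only [map_add, map_smulₛₗ, add_apply, smul_apply]
  match_scalars <;>
    simp only [id, ← Complex.exp_conj, map_mul, map_neg, Complex.conj_ofReal, Complex.conj_I,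
      ← Complex.exp_add, ← Complex.exp_zero] <;> congr 1 <;> ring

theorem Complex.exp_pi_div_four_mul_I :
    Complex.exp ((Real.pi / 4 : ℝ) * Complex.I) = ((Real.sqrt 2 / 2 : ℝ) : ℂ) * (1 + Complex.I) := by
  rw [Complex.exp_mul_I, ← Complex.ofReal_cos, ← Complex.ofReal_sin, Real.cos_pi_div_four,
    Real.sin_pi_div_four]
  ring

theorem Complex.exp_neg_pi_div_four_mul_I :
    Complex.exp (-(Real.pi / 4 : ℝ) * Complex.I) =
      ((Real.sqrt 2 / 2 : ℝ) : ℂ) * (1 - Complex.I) := by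
  rw [← Complex.ofReal_neg, Complex.exp_mul_I, ← Complex.ofReal_cos, ← Complex.ofReal_sin,
    Real.cos_neg, Real.sin_neg, Real.cos_pi_div_four, Real.sin_pi_div_four]
  push_cast
  ring

theorem eq_smul_exp_pi_div_four_combination {M : Type*} [AddCommGroup M] [Module ℂ M]
    (x y : M) :
    x = (((2 * Real.sqrt 2)⁻¹ : ℝ) : ℂ) •
      (((Complex.exp (-(Real.pi / 4 : ℝ) * Complex.I) • x +
          Complex.exp ((Real.pi / 4 : ℝ) * Complex.I) • y) +
        (Complex.exp ((Real.pi / 4 : ℝ) * Complex.I) • x +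
          Complex.exp (-(Real.pi / 4 : ℝ) * Complex.I) • y)) +
      Complex.I • ((Complex.exp (-(Real.pi / 4 : ℝ) * Complex.I) • x +
          Complex.exp ((Real.pi / 4 : ℝ) * Complex.I) • y) -
        (Complex.exp ((Real.pi / 4 : ℝ) * Complex.I) • x +
          Complex.exp (-(Real.pi / 4 : ℝ) * Complex.I) • y))) := by
  have hsqrt : ((Real.sqrt 2 : ℝ) : ℂ) ^ 2 = 2 := by
    norm_cast
    exact Real.sq_sqrt zero_le_two
  have hsqrt0 : ((Real.sqrt 2 : ℝ) : ℂ) ≠ 0 := by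
    norm_cast
    positivity
  rw [Complex.exp_neg_pi_div_four_mul_I, Complex.exp_pi_div_four_mul_I]
  match_scalars
  · field_simp
    linear_combination 2 * Complex.I_sq
  · field_simp
    linear_combination -2 * Complex.I_sq

theorem OrthonormalBasis.eq_top_of_rankOne_mem {E ι : Type*} [NormedAddCommGroup E]
    [InnerProductSpace ℂ E] [Fintype ι] (b : OrthonormalBasis ι ℂ E) (S : Submodule ℂ (E →L[ℂ] E))
    (hdiag : ∀ i, rankOne ℂ (b i) (b i) ∈ S)
    (hpair : ∀ i j, i ≠ j → rankOne ℂ (b i) (b i) +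
      Complex.exp (-(Real.pi / 4 : ℝ) * Complex.I) • rankOne ℂ (b i) (b j) +
      Complex.exp ((Real.pi / 4 : ℝ) * Complex.I) • rankOne ℂ (b j) (b i) +
      rankOne ℂ (b j) (b j) ∈ S) :
    S = ⊤ := by
  have hoff : ∀ i j, i ≠ j → Complex.exp (-(Real.pi / 4 : ℝ) * Complex.I) • rankOne ℂ (b i) (b j) +
      Complex.exp ((Real.pi / 4 : ℝ) * Complex.I) • rankOne ℂ (b j) (b i) ∈ S := fun i j hij => by
    convert sub_mem (sub_mem (hpair i j hij) (hdiag i)) (hdiag j) using 1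
    abel
  rw [eq_top_iff, ← b.span_rankOne_eq_top, Submodule.span_le]
  rintro _ ⟨⟨i, j⟩, rfl⟩
  obtain rfl | hij := eq_or_ne i j
  · exact hdiag i
  · have hA := hoff i j hij
    have hB := hoff j i hij.symm
    rw [add_comm] at hB
    show rankOne ℂ (b i) (b j) ∈ S
    rw [eq_smul_exp_pi_div_four_combination (rankOne ℂ (b i) (b j)) (rankOne ℂ (b j) (b i))]
    exact S.smul_mem _ (add_mem (add_mem hA hB) (S.smul_mem _ (sub_mem hA hB)))

theorem ketbraD_eq_rankOne (D : ℕ) (u v : EuclideanSpace ℂ (Fin D)) :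
    ketbraD D u v = rankOne ℂ u v :=
  rfl

theorem permU_apply_single (D : ℕ) (π : Equiv.Perm (Fin D)) (n : Fin D) :
    permU D π (EuclideanSpace.single n 1) = EuclideanSpace.single (π n) 1 := by
  simp only [permU, sum_apply, smulRight_apply, innerSL_apply_apply,
    EuclideanSpace.inner_single_left, PiLp.single_apply, map_one, one_mul, ite_smul,
    one_smul, zero_smul, Finset.sum_ite_eq', Finset.mem_univ, if_true]

/-- For `α > 0` the operators `U(π)|1⟩⟨1|U(π)*` and
`U(π)|d_{O'}(α)⟩⟨d_{O'}(α)|U(π)*`, `π ∈ S_D`, span all of `L(ℂ^D)`; in particular,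
for `m ≠ n`, `|m⟩⟨n| = 2^{-3/2}[(A+B) + i(A−B)]` with
`A = e^{-iπ/4}|m⟩⟨n| + e^{iπ/4}|n⟩⟨m|` and `B = e^{iπ/4}|m⟩⟨n| + e^{-iπ/4}|n⟩⟨m|`. -/
theorem covariant_family_informationally_complete (D : ℕ) (hD : 2 ≤ D)
    (α : ℝ) (hα : 0 < α)
    (dO' : EuclideanSpace ℂ (Fin D))
    (hdO' : dO' = (α : ℂ) •
      (Complex.exp (-(Real.pi / 8 : ℝ) * Complex.I) •
          EuclideanSpace.single (⟨0, by omega⟩ : Fin D) (1 : ℂ) +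
        Complex.exp ((Real.pi / 8 : ℝ) * Complex.I) •
          EuclideanSpace.single (⟨1, by omega⟩ : Fin D) (1 : ℂ))) :
    (Submodule.span ℂ
        ({A | ∃ π : Equiv.Perm (Fin D), A =
            permU D π ∘L
              ketbraD D (EuclideanSpace.single (⟨0, by omega⟩ : Fin D) (1 : ℂ))
                (EuclideanSpace.single (⟨0, by omega⟩ : Fin D) (1 : ℂ)) ∘L
              adjoint (permU D π)} ∪
         {A | ∃ π : Equiv.Perm (Fin D), A =
            permU D π ∘L ketbraD D dO' dO' ∘L adjoint (permU D π)} :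
          Set (EuclideanSpace ℂ (Fin D) →L[ℂ] EuclideanSpace ℂ (Fin D))) = ⊤) ∧
    (∀ m n : Fin D, m ≠ n →
      ketbraD D (EuclideanSpace.single m (1 : ℂ)) (EuclideanSpace.single n (1 : ℂ)) =
        (((2 * Real.sqrt 2)⁻¹ : ℝ) : ℂ) •
          (((Complex.exp (-(Real.pi / 4 : ℝ) * Complex.I) •
                ketbraD D (EuclideanSpace.single m (1 : ℂ))
                  (EuclideanSpace.single n (1 : ℂ)) +
              Complex.exp ((Real.pi / 4 : ℝ) * Complex.I) •
                ketbraD D (EuclideanSpace.single n (1 : ℂ))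
                  (EuclideanSpace.single m (1 : ℂ))) +
            (Complex.exp ((Real.pi / 4 : ℝ) * Complex.I) •
                ketbraD D (EuclideanSpace.single m (1 : ℂ))
                  (EuclideanSpace.single n (1 : ℂ)) +
              Complex.exp (-(Real.pi / 4 : ℝ) * Complex.I) •
                ketbraD D (EuclideanSpace.single n (1 : ℂ))
                  (EuclideanSpace.single m (1 : ℂ)))) +
          Complex.I •
            ((Complex.exp (-(Real.pi / 4 : ℝ) * Complex.I) •
                ketbraD D (EuclideanSpace.single m (1 : ℂ))
                  (EuclideanSpace.single n (1 : ℂ)) +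
              Complex.exp ((Real.pi / 4 : ℝ) * Complex.I) •
                ketbraD D (EuclideanSpace.single n (1 : ℂ))
                  (EuclideanSpace.single m (1 : ℂ))) -
            (Complex.exp ((Real.pi / 4 : ℝ) * Complex.I) •
                ketbraD D (EuclideanSpace.single m (1 : ℂ))
                  (EuclideanSpace.single n (1 : ℂ)) +
              Complex.exp (-(Real.pi / 4 : ℝ) * Complex.I) •
                ketbraD D (EuclideanSpace.single n (1 : ℂ))
                  (EuclideanSpace.single m (1 : ℂ)))))) := by
  simp only [ketbraD_eq_rankOne]
  refine ⟨?_, fun m n _ => eq_smul_exp_pi_div_four_combination _ _⟩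
  refine (EuclideanSpace.basisFun (Fin D) ℂ).eq_top_of_rankOne_mem _ (fun k => ?_) fun m n hmn => ?_
  all_goals simp only [EuclideanSpace.basisFun_apply]
  · refine Submodule.subset_span (Or.inl ⟨Equiv.swap ⟨0, by omega⟩ k, ?_⟩)
    rw [comp_rankOne_comp_adjoint, permU_apply_single, Equiv.swap_apply_left]
  · obtain ⟨π, h0, h1⟩ := Equiv.Perm.exists_apply_eq_and_apply_eq
      (a := (⟨0, by omega⟩ : Fin D)) (b := ⟨1, by omega⟩) (by simp [Fin.ext_iff]) hmn
    have hπd : permU D π dO' = (α : ℂ) • (Complex.exp (-(Real.pi / 8 : ℝ) * Complex.I) •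
        EuclideanSpace.single m 1 + Complex.exp ((Real.pi / 8 : ℝ) * Complex.I) •
        EuclideanSpace.single n 1) := by
      rw [hdO']
      simp only [map_smul, map_add, permU_apply_single, h0, h1]
    refine (Submodule.smul_mem_iff _ (pow_ne_zero 2 (Complex.ofReal_ne_zero.mpr hα.ne'))).mp ?_
    refine Submodule.subset_span (Or.inr ⟨π, ?_⟩)
    rw [comp_rankOne_comp_adjoint, hπd, rankOne_smul_smul, rankOne_exp_smul_add_exp_smul_self,
      show 2 * (Real.pi / 8) = Real.pi / 4 by ring, Complex.conj_ofReal, sq]
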